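/- arXiv:1009.2014 — 4 statements merged into one kernel-verified Lean document; each statement's English description precedes it below -/
import Mathlib

section
/- Let F : X → H satisfy ρ₋(d(x,y)) ≤ ‖F(x)−F(y)‖ ≤ ρ₊(d(x,y)) for nondecreasing ρ₋, ρ₊ : ℝ≥0 → ℝ≥0, let t > 0, and set ξ_x = e^{-t‖F(x)‖²} Exp(√(2t) F(x)). Then for all x, x' ∈ X: e^{-t ρ₊(d(x,x'))²} ≤ ⟨ξ_x, ξ_{x'}⟩ ≤ e^{-t ρ₋(d(x,x'))²}. -/
open RealInnerProductSpace

/-- Expanding `‖u - v‖² = ‖u‖² - 2⟪u, v⟫ + ‖v‖²` shows that the normalising factors and the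
cross term `e^{2t⟪u, v⟫}` combine to `e^{-t‖u - v‖²}`. -/
theorem inner_normalized_exp_smul {H E : Type*} [NormedAddCommGroup H] [InnerProductSpace ℝ H]
    [NormedAddCommGroup E] [InnerProductSpace ℝ E] (Exp : H → E)
    (hExp : ∀ ζ ζ' : H, ⟪Exp ζ, Exp ζ'⟫ = Real.exp ⟪ζ, ζ'⟫) {t : ℝ} (ht : 0 ≤ t) (u v : H) :
    ⟪Real.exp (-t * ‖u‖ ^ 2) • Exp (Real.sqrt (2 * t) • u),
      Real.exp (-t * ‖v‖ ^ 2) • Exp (Real.sqrt (2 * t) • v)⟫ =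
      Real.exp (-t * ‖u - v‖ ^ 2) := by
  have hsqrt : Real.sqrt (2 * t) * Real.sqrt (2 * t) = 2 * t := Real.mul_self_sqrt (by positivity)
  rw [real_inner_smul_left, real_inner_smul_right, hExp, real_inner_smul_left,
    real_inner_smul_right, ← mul_assoc (Real.sqrt _), hsqrt, ← Real.exp_add, ← Real.exp_add, norm_sub_sq_real]
  ring_nf

theorem Real.exp_neg_mul_sq_le_exp_neg_mul_sq {t a b : ℝ} (ht : 0 ≤ t) (ha : 0 ≤ a)
    (hab : a ≤ b) : Real.exp (-t * b ^ 2) ≤ Real.exp (-t * a ^ 2) := by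
  rw [Real.exp_le_exp, neg_mul, neg_mul, neg_le_neg_iff]
  gcongr

theorem fock_vectors_inner_sandwich_general
    {X : Type*} [MetricSpace X]
    {H E : Type*} [NormedAddCommGroup H] [InnerProductSpace ℝ H]
    [NormedAddCommGroup E] [InnerProductSpace ℝ E]
    (Exp : H → E)
    (hExp : ∀ ζ ζ' : H, ⟪Exp ζ, Exp ζ'⟫ = Real.exp ⟪ζ, ζ'⟫)
    (F : X → H) (ρminus ρplus : ℝ → ℝ)
    (hρminus_nonneg : ∀ s : ℝ, 0 ≤ ρminus s)
    (hF : ∀ x y : X, ρminus (dist x y) ≤ ‖F x - F y‖ ∧ ‖F x - F y‖ ≤ ρplus (dist x y))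
    (t : ℝ) (ht : 0 < t)
    (ξ : X → E)
    (hξ : ∀ x : X, ξ x = Real.exp (-t * ‖F x‖ ^ 2) • Exp (Real.sqrt (2 * t) • F x)) :
    ∀ x x' : X,
      Real.exp (-t * ρplus (dist x x') ^ 2) ≤ ⟪ξ x, ξ x'⟫ ∧
      ⟪ξ x, ξ x'⟫ ≤ Real.exp (-t * ρminus (dist x x') ^ 2) := by
  intro x x'
  rw [hξ, hξ, inner_normalized_exp_smul Exp hExp ht.le]
  obtain ⟨hlower, hupper⟩ := hF x x'
  exact ⟨Real.exp_neg_mul_sq_le_exp_neg_mul_sq ht.le (norm_nonneg _) hupper,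
    Real.exp_neg_mul_sq_le_exp_neg_mul_sq ht.le (hρminus_nonneg _) hlower⟩

/-- If `ρ₋(d(x,y)) ≤ ‖F x - F y‖ ≤ ρ₊(d(x,y))` for nondecreasing
`ρ₋, ρ₊ : ℝ≥0 → ℝ≥0`, `t > 0`, and `ξ x = e^{-t‖F x‖²} Exp(√(2t) F x)` in the
Fock space, then `e^{-t ρ₊(d(x,x'))²} ≤ ⟨ξ x, ξ x'⟩ ≤ e^{-t ρ₋(d(x,x'))²}`. -/
theorem fock_vectors_inner_sandwich
    {X : Type*} [MetricSpace X]
    {H E : Type*} [NormedAddCommGroup H] [InnerProductSpace ℝ H]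
    [NormedAddCommGroup E] [InnerProductSpace ℝ E]
    (Exp : H → E)
    (hExp : ∀ ζ ζ' : H, ⟪Exp ζ, Exp ζ'⟫ = Real.exp ⟪ζ, ζ'⟫)
    (F : X → H) (ρminus ρplus : ℝ → ℝ)
    (hρminus_mono : Monotone ρminus) (hρplus_mono : Monotone ρplus)
    (hρminus_nonneg : ∀ s : ℝ, 0 ≤ ρminus s) (hρplus_nonneg : ∀ s : ℝ, 0 ≤ ρplus s)
    (hF : ∀ x y : X, ρminus (dist x y) ≤ ‖F x - F y‖ ∧ ‖F x - F y‖ ≤ ρplus (dist x y))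
    (t : ℝ) (ht : 0 < t)
    (ξ : X → E)
    (hξ : ∀ x : X, ξ x = Real.exp (-t * ‖F x‖ ^ 2) • Exp (Real.sqrt (2 * t) • F x)) :
    ∀ x x' : X,
      Real.exp (-t * ρplus (dist x x') ^ 2) ≤ ⟪ξ x, ξ x'⟫ ∧
      ⟪ξ x, ξ x'⟫ ≤ Real.exp (-t * ρminus (dist x x') ^ 2) :=
  fock_vectors_inner_sandwich_general Exp hExp F ρminus ρplus hρminus_nonneg hF t ht ξ hξ
end

section
/- Let (η_n)_{n≥1} be maps η_n : X → H_n from a metric space X to Hilbert spaces such that ‖η_n(x)‖ = 1 for all x, and ‖η_n(x) − η_n(x')‖ ≤ n^{-(1/2+p)} whenever d(x,x') ≤ √n, for some fixed p > 0. Fix a base point x₀ ∈ X and define F : X → ⊕_{n=1}^∞ H_n by F(x) = (1/2)((η_1(x)−η_1(x₀)) ⊕ (η_2(x)−η_2(x₀)) ⊕ ⋯). Then F is well-defined (the sum ∑_n ‖η_n(x)−η_n(x₀)‖² converges) and there is a constant C > 0 with ‖F(x)−F(x')‖² ≤ d(x,x')² + C for all x, x' ∈ X. -/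
/-!
Split the series `∑ₙ ‖η n x - η n x'‖²` at `N = ⌈d(x,x')²⌉`. The first `N` terms are at most
`4` each, since the `η n` take unit values; from `N` on we have `d(x,x') ≤ √n`, so the terms are
at most `n^{-(1+2p)}`, whose series converges because `p > 0`. Hence a quarter of the sum is at
most `N + S / 4 ≤ d(x,x')² + 1 + S / 4` with `S = ∑ₙ n^{-(1+2p)}`.
-/

open Finset

theorem summable_and_tsum_le_of_le_of_le_tail {f g : ℕ → ℝ} {M : ℝ} (N : ℕ)
    (hf : ∀ n, 0 ≤ f n) (hfM : ∀ n, f n ≤ M) (hfg : ∀ n, N ≤ n → f n ≤ g n)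
    (hg : Summable g) (hg0 : ∀ n, 0 ≤ g n) :
    Summable f ∧ ∑' n, f n ≤ N * M + ∑' n, g n := by
  have hsum : Summable f := hg.of_norm_bounded_eventually_nat <|
    Filter.eventually_atTop.2 ⟨N, fun n hn => (Real.norm_of_nonneg (hf n)).trans_le (hfg n hn)⟩
  refine ⟨hsum, ?_⟩
  have head : ∑ n ∈ range N, f n ≤ N * M := by
    simpa using sum_le_card_nsmul (range N) f M fun n _ => hfM n
  have tail : ∑' n, f (n + N) ≤ ∑' n, g n :=
    calc ∑' n, f (n + N) ≤ ∑' n, g (n + N) :=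
          Summable.tsum_le_tsum (fun n => hfg _ (Nat.le_add_left N n))
            ((summable_nat_add_iff N).2 hsum) ((summable_nat_add_iff N).2 hg)
      _ ≤ ∑' n, g n := tsum_comp_le_tsum_of_inj hg hg0 (add_left_injective N)
  rw [← hsum.sum_add_tsum_nat_add N]
  exact add_le_add head tail

theorem sq_norm_sub_le_four {E : Type*} [SeminormedAddCommGroup E] {u v : E}
    (hu : ‖u‖ = 1) (hv : ‖v‖ = 1) : ‖u - v‖ ^ 2 ≤ 4 := by
  have : ‖u - v‖ ≤ 2 := (norm_sub_le u v).trans_eq (by rw [hu, hv]; norm_num)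
  nlinarith [norm_nonneg (u - v)]

theorem sq_norm_sub_le_rpow_of_sq_dist_le {X E : Type*} [PseudoMetricSpace X]
    [SeminormedAddCommGroup E] {f : X → E} {t p : ℝ} (ht : 0 ≤ t)
    (hclose : ∀ x x' : X, dist x x' ≤ √t → ‖f x - f x'‖ ≤ t ^ (-(1 / 2 + p)))
    {x x' : X} (hxx' : dist x x' ^ 2 ≤ t) :
    ‖f x - f x'‖ ^ 2 ≤ t ^ (-(1 + 2 * p)) :=
  calc ‖f x - f x'‖ ^ 2 ≤ (t ^ (-(1 / 2 + p))) ^ 2 :=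
        pow_le_pow_left₀ (norm_nonneg _) (hclose x x' ((Real.le_sqrt dist_nonneg ht).2 hxx')) 2
    _ = t ^ (-(1 + 2 * p)) := by
        rw [← Real.rpow_mul_natCast ht]
        ring_nf

theorem direct_sum_embedding_lipschitz_general
    {X : Type*} [MetricSpace X]
    (H : ℕ → Type*) [∀ n, NormedAddCommGroup (H n)]
    (η : (n : ℕ) → X → H n) (p : ℝ) (hp : 0 < p)
    (hunit : ∀ n : ℕ, 1 ≤ n → ∀ x : X, ‖η n x‖ = 1)
    (hclose : ∀ n : ℕ, 1 ≤ n → ∀ x x' : X,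
      dist x x' ≤ Real.sqrt n → ‖η n x - η n x'‖ ≤ (n : ℝ) ^ (-(1 / 2 + p)))
    (x₀ : X) :
    (∀ x : X, Summable fun n : ℕ => ‖η (n + 1) x - η (n + 1) x₀‖ ^ 2) ∧
    ∃ C : ℝ, 0 < C ∧ ∀ x x' : X,
      (1 / 4) * ∑' n : ℕ, ‖η (n + 1) x - η (n + 1) x'‖ ^ 2 ≤ dist x x' ^ 2 + C := by
  set g : ℕ → ℝ := fun n => ((n + 1 : ℕ) : ℝ) ^ (-(1 + 2 * p))
  have hg : Summable g := (summable_nat_add_iff 1).2 (Real.summable_nat_rpow.2 (by linarith))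
  have hg0 : ∀ n, 0 ≤ g n := fun n => by positivity
  have hsplit (x x' : X) := summable_and_tsum_le_of_le_of_le_tail (g := g) ⌈dist x x' ^ 2⌉₊
    (fun n => sq_nonneg ‖η (n + 1) x - η (n + 1) x'‖)
    (fun n => sq_norm_sub_le_four (hunit _ n.succ_pos x) (hunit _ n.succ_pos x'))
    (fun n hn => sq_norm_sub_le_rpow_of_sq_dist_le (by positivity) (hclose _ n.succ_pos)
      ((Nat.le_ceil _).trans (by exact_mod_cast hn.trans n.le_succ)))
    hg hg0
  refine ⟨fun x => (hsplit x x₀).1, 1 + (∑' n, g n) / 4,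
    by linarith [(tsum_nonneg hg0 : 0 ≤ ∑' n, g n)], fun x x' => ?_⟩
  have hceil := Nat.ceil_lt_add_one (sq_nonneg (dist x x'))
  linarith [(hsplit x x').2]

/-- Given maps `η n : X → H n` (for `n ≥ 1`) into Hilbert spaces with
`‖η n x‖ = 1` and `‖η n x - η n x'‖ ≤ n^{-(1/2+p)}` whenever `d(x,x') ≤ √n`
(`p > 0` fixed), the map `F(x) = (1/2)(⊕_{n≥1} (η n x - η n x₀))` into the
Hilbert space direct sum is well defined (the defining series converges) and
`‖F x - F x'‖² = (1/4) ∑_n ‖η n x - η n x'‖² ≤ d(x,x')² + C` for some `C > 0`. -/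
theorem direct_sum_embedding_lipschitz
    {X : Type*} [MetricSpace X]
    (H : ℕ → Type*) [∀ n, NormedAddCommGroup (H n)] [∀ n, InnerProductSpace ℝ (H n)]
    (η : (n : ℕ) → X → H n) (p : ℝ) (hp : 0 < p)
    (hunit : ∀ n : ℕ, 1 ≤ n → ∀ x : X, ‖η n x‖ = 1)
    (hclose : ∀ n : ℕ, 1 ≤ n → ∀ x x' : X,
      dist x x' ≤ Real.sqrt n → ‖η n x - η n x'‖ ≤ (n : ℝ) ^ (-(1 / 2 + p)))
    (x₀ : X) :
    (∀ x : X, Summable fun n : ℕ => ‖η (n + 1) x - η (n + 1) x₀‖ ^ 2) ∧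
    ∃ C : ℝ, 0 < C ∧ ∀ x x' : X,
      (1 / 4) * ∑' n : ℕ, ‖η (n + 1) x - η (n + 1) x'‖ ^ 2 ≤ dist x x' ^ 2 + C :=
  direct_sum_embedding_lipschitz_general H η p hp hunit hclose x₀
end

section
/- Let G be a group with a proper length function and suppose for some r > 0, R > 0, ε > 0 that |B_{r+R}| ≤ (1+ε)|B_{r−R}|. Define for each x ∈ G the unit vector g(x) = √(χ_{B(x,r)} / |B_r|) ∈ ℓ²(G), where χ_{B(x,r)} is the characteristic function of the closed ball of radius r around x. Then d(x,y) ≤ R implies ‖g(x) − g(y)‖₂² ≤ ε. -/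
/-!
For sets `A`, `B` and `N ≥ 0`, the squared `ℓ²` distance between `√(χ_A / N)` and `√(χ_B / N)`
is exactly `|A ∆ B| / N`. By the triangle inequality for `d(x, y) = l (x⁻¹ * y)`, when
`d(x, y) ≤ R` the symmetric difference `B(x, r) ∆ B(y, r)` lies in the annulus
`B(x, r + R) \ B(x, r - R)`, which has `|B_{r+R}| - |B_{r-R}| ≤ ε |B_{r-R}| ≤ ε |B_r|` elements.
-/

open Set
open scoped symmDiff

-- For infinite `s` both sides are junk `0`.
theorem tsum_indicator_one_eq_ncard {α : Type*} (s : Set α) :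
    ∑' z, s.indicator (fun _ => (1 : ℝ)) z = s.ncard := by
  rw [← tsum_subtype, tsum_const, nsmul_eq_mul, mul_one, Nat.card_coe_set_eq]

theorem sq_sqrt_indicator_div_sub_sqrt_indicator_div {α : Type*} (A B : Set α) {c : ℝ}
    (hc : 0 ≤ c) (z : α) :
    (√(A.indicator (fun _ => (1 : ℝ)) z / c) - √(B.indicator (fun _ => (1 : ℝ)) z / c)) ^ 2 =
      (A ∆ B).indicator (fun _ => (1 : ℝ)) z / c := by
  by_cases hA : z ∈ A <;> by_cases hB : z ∈ B <;>
    simp [hA, hB, Set.mem_symmDiff, Real.sq_sqrt hc]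

section LengthBall

variable {G : Type*} [Group G] (l : G → ℝ)

def lengthBall (x : G) (r : ℝ) : Set G := {g | l (x⁻¹ * g) ≤ r}

theorem lengthBall_eq_image (x : G) (r : ℝ) :
    lengthBall l x r = (x * ·) '' {g | l g ≤ r} := by
  rw [image_mul_left]
  rfl

theorem ncard_lengthBall (x : G) (r : ℝ) :
    (lengthBall l x r).ncard = {g | l g ≤ r}.ncard := by
  rw [lengthBall_eq_image]
  exact ncard_image_of_injective _ (mul_right_injective x)

theorem lengthBall_finite (hproper : ∀ M : ℝ, {g : G | l g ≤ M}.Finite) (x : G) (r : ℝ) :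
    (lengthBall l x r).Finite := by
  rw [lengthBall_eq_image]
  exact (hproper r).image _

theorem lengthBall_mono (x : G) {r s : ℝ} (h : r ≤ s) : lengthBall l x r ⊆ lengthBall l x s :=
  fun _ hg => le_trans hg h

variable {l}

theorem lengthBall_subset_lengthBall_add (hsub : ∀ x y : G, l (x * y) ≤ l x + l y)
    {x y : G} {R : ℝ} (hxy : l (x⁻¹ * y) ≤ R) (r : ℝ) :
    lengthBall l y r ⊆ lengthBall l x (r + R) := fun g hg =>
  calc l (x⁻¹ * g) = l ((x⁻¹ * y) * (y⁻¹ * g)) := by group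
    _ ≤ l (x⁻¹ * y) + l (y⁻¹ * g) := hsub _ _
    _ ≤ r + R := by linarith [hg.out]

theorem symmDiff_lengthBall_subset (hinv : ∀ x : G, l x⁻¹ = l x)
    (hsub : ∀ x y : G, l (x * y) ≤ l x + l y) {x y : G} {R : ℝ} (hR : 0 ≤ R)
    (hxy : l (x⁻¹ * y) ≤ R) (r : ℝ) :
    lengthBall l x r ∆ lengthBall l y r ⊆ lengthBall l x (r + R) \ lengthBall l x (r - R) := by
  have hyx : l (y⁻¹ * x) ≤ R := by rwa [← inv_inv (y⁻¹ * x), hinv, mul_inv_rev, inv_inv]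
  rw [symmDiff_eq_sup_sdiff_inf]
  refine sdiff_subset_sdiff (union_subset ?_ ?_) (subset_inter ?_ ?_)
  · exact lengthBall_mono l x (by linarith)
  · exact lengthBall_subset_lengthBall_add hsub hxy r
  · exact lengthBall_mono l x (by linarith)
  · simpa using lengthBall_subset_lengthBall_add hsub hyx (r - R)

theorem ncard_symmDiff_lengthBall_add_ncard_le (hinv : ∀ x : G, l x⁻¹ = l x)
    (hsub : ∀ x y : G, l (x * y) ≤ l x + l y) (hproper : ∀ M : ℝ, {g : G | l g ≤ M}.Finite)
    {x y : G} {R : ℝ} (hR : 0 ≤ R) (hxy : l (x⁻¹ * y) ≤ R) (r : ℝ) :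
    (lengthBall l x r ∆ lengthBall l y r).ncard + {g | l g ≤ r - R}.ncard ≤
      {g | l g ≤ r + R}.ncard := by
  have hfin := lengthBall_finite l hproper x (r + R)
  rw [← ncard_lengthBall l x (r - R), ← ncard_lengthBall l x (r + R),
    ← ncard_sdiff_add_ncard_of_subset (lengthBall_mono l x (by linarith : r - R ≤ r + R)) hfin]
  exact Nat.add_le_add_right
    (ncard_le_ncard (symmDiff_lengthBall_subset hinv hsub hR hxy r) hfin.sdiff) _

end LengthBall

theorem normalized_ball_vectors_close_general
    {G : Type*} [Group G] (l : G → ℝ)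
    (hinv : ∀ x : G, l x⁻¹ = l x)
    (hsub : ∀ x y : G, l (x * y) ≤ l x + l y)
    (hproper : ∀ M : ℝ, {g : G | l g ≤ M}.Finite)
    (r R ε : ℝ) (hR : 0 < R) (hε : 0 < ε)
    (hball : ({g : G | l g ≤ r + R}.ncard : ℝ) ≤
      (1 + ε) * ({g : G | l g ≤ r - R}.ncard : ℝ)) :
    ∀ x y : G, l (x⁻¹ * y) ≤ R →
      ∑' z : G,
        (Real.sqrt (Set.indicator {g : G | l (x⁻¹ * g) ≤ r} (fun _ => (1 : ℝ)) z /
            ({g : G | l g ≤ r}.ncard : ℝ)) -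
         Real.sqrt (Set.indicator {g : G | l (y⁻¹ * g) ≤ r} (fun _ => (1 : ℝ)) z /
            ({g : G | l g ≤ r}.ncard : ℝ))) ^ 2 ≤ ε := by
  intro x y hxy
  set N : ℝ := ({g : G | l g ≤ r}.ncard : ℝ)
  set S := lengthBall l x r ∆ lengthBall l y r
  have hannulus : (S.ncard : ℝ) + {g | l g ≤ r - R}.ncard ≤ {g | l g ≤ r + R}.ncard := by
    exact_mod_cast ncard_symmDiff_lengthBall_add_ncard_le hinv hsub hproper hR.le hxy r
  have hsmall : ({g : G | l g ≤ r - R}.ncard : ℝ) ≤ N := by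
    have hmono : {g : G | l g ≤ r - R} ⊆ {g | l g ≤ r} := fun g (hg : l g ≤ r - R) =>
      show l g ≤ r by linarith
    exact Nat.cast_le.mpr (ncard_le_ncard hmono (hproper r))
  have hS : (S.ncard : ℝ) ≤ ε * N :=
    calc (S.ncard : ℝ) ≤ ε * {g : G | l g ≤ r - R}.ncard := by linarith
      _ ≤ ε * N := mul_le_mul_of_nonneg_left hsmall hε.le
  calc _ = ∑' z, S.indicator (fun _ => (1 : ℝ)) z / N :=
        tsum_congr fun z => sq_sqrt_indicator_div_sub_sqrt_indicator_div _ _ (Nat.cast_nonneg _) z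
    _ = S.ncard / N := by rw [tsum_div_const, tsum_indicator_one_eq_ncard]
    _ ≤ ε := div_le_of_le_mul₀ (Nat.cast_nonneg _) hε.le hS

/-- If `|B_{r+R}| ≤ (1+ε)|B_{r−R}|` for a group `G` with proper length function
`l` (metric `d(x,y) = l(x⁻¹y)`), then the unit vectors
`g(x) = √(χ_{B(x,r)}/|B_r|) ∈ ℓ²(G)` satisfy `‖g(x) − g(y)‖₂² ≤ ε` whenever
`d(x,y) ≤ R`. -/
theorem normalized_ball_vectors_close
    {G : Type*} [Group G] (l : G → ℝ)
    (h0 : ∀ x : G, l x = 0 ↔ x = 1)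
    (hinv : ∀ x : G, l x⁻¹ = l x)
    (hsub : ∀ x y : G, l (x * y) ≤ l x + l y)
    (hproper : ∀ M : ℝ, {g : G | l g ≤ M}.Finite)
    (r R ε : ℝ) (hr : 0 < r) (hR : 0 < R) (hε : 0 < ε)
    (hball : ({g : G | l g ≤ r + R}.ncard : ℝ) ≤
      (1 + ε) * ({g : G | l g ≤ r - R}.ncard : ℝ)) :
    ∀ x y : G, l (x⁻¹ * y) ≤ R →
      ∑' z : G,
        (Real.sqrt (Set.indicator {g : G | l (x⁻¹ * g) ≤ r} (fun _ => (1 : ℝ)) z /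
            ({g : G | l g ≤ r}.ncard : ℝ)) -
         Real.sqrt (Set.indicator {g : G | l (y⁻¹ * g) ≤ r} (fun _ => (1 : ℝ)) z /
            ({g : G | l g ≤ r}.ncard : ℝ))) ^ 2 ≤ ε :=
  normalized_ball_vectors_close_general l hinv hsub hproper r R ε hR hε hball
end

section
/- Let G be a group with a proper length function and suppose there is a strictly increasing sequence (n_i) of natural numbers and p > 0 with |B_{2n_i^{3/2+4p}+√(n_i)}| ≥ (1 + 1/(2n_i^{1+2p}))^{n_i^{1+3p}} |B_{√(n_i)}| for all i, where each n_i ≥ 2^{1/p}. Then G does not have polynomial growth, i.e., there is no polynomial P with |B_r| ≤ P(r) for all r ≥ 0. -/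
/-!
Since `log (1 + x) ≥ x / 2` for `0 ≤ x ≤ 1`, the growth factor
`(1 + 1/(2n^{1+2p}))^{n^{1+3p}}` is at least `exp (n^p / 4)`, and the ball `B_{√n}` contains `1`.
So `|B_r|` at the radius `r = 2n^{3/2+4p} + √n = O(n^{3/2+4p})` is at least `exp (n^p / 4)`,
whereas a polynomial evaluated at `r` is `O(n^{(3/2+4p) deg P}) = o(exp (n^p / 4))`.
-/

open Real Filter Asymptotics Polynomial

namespace Real

theorem exp_mul_div_two_le_one_add_rpow {x y : ℝ} (hx0 : 0 ≤ x) (hx1 : x ≤ 1) (hy : 0 ≤ y) :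
    exp (x * y / 2) ≤ (1 + x) ^ y := by
  have hx : 0 < 1 + x := by linarith
  have hlog : x / 2 ≤ log (1 + x) :=
    calc x / 2 ≤ x / (1 + x) := div_le_div_of_nonneg_left hx0 hx (by linarith)
      _ = 1 - (1 + x)⁻¹ := by field_simp; ring
      _ ≤ log (1 + x) := one_sub_inv_le_log_of_pos hx
  rw [rpow_def_of_pos hx, mul_div_right_comm]
  exact exp_le_exp.mpr (mul_le_mul_of_nonneg_right hlog hy)

theorem exp_rpow_div_four_le_one_add_rpow {t p : ℝ} (ht : 1 ≤ t) (hp : 0 ≤ p) :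
    exp (t ^ p / 4) ≤ (1 + 1 / (2 * t ^ (1 + 2 * p))) ^ (t ^ (1 + 3 * p)) := by
  have ht0 : 0 < t := by linarith
  have hs : 1 ≤ t ^ (1 + 2 * p) := one_le_rpow ht (by linarith)
  have hxy : 1 / (2 * t ^ (1 + 2 * p)) * t ^ (1 + 3 * p) / 2 = t ^ p / 4 := by
    rw [show 1 + 3 * p = p + (1 + 2 * p) by ring, rpow_add ht0 p]
    field_simp
    ring
  rw [← hxy]
  refine exp_mul_div_two_le_one_add_rpow (by positivity) ?_ (by positivity)
  rw [div_le_one (by positivity)]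
  linarith

theorem isLittleO_rpow_exp_mul_rpow_atTop (s : ℝ) {b p : ℝ} (hb : 0 < b) (hp : 0 < p) :
    (fun t : ℝ ↦ t ^ s) =o[atTop] fun t ↦ exp (b * t ^ p) := by
  refine ((isLittleO_rpow_exp_pos_mul_atTop (s / p) hb).comp_tendsto
    (tendsto_rpow_atTop hp)).congr' ?_ EventuallyEq.rfl
  filter_upwards [eventually_ge_atTop 0] with t ht
  simp only [Function.comp_apply, ← rpow_mul ht, mul_div_cancel₀ s hp.ne']

theorem tendsto_two_mul_rpow_add_sqrt_atTop {a : ℝ} (ha : 0 < a) :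
    Tendsto (fun t : ℝ ↦ 2 * t ^ a + √t) atTop atTop :=
  ((tendsto_rpow_atTop ha).const_mul_atTop two_pos).atTop_add_nonneg fun t ↦ sqrt_nonneg t

theorem isBigO_two_mul_rpow_add_sqrt_atTop {a : ℝ} (ha : 1 / 2 ≤ a) :
    (fun t : ℝ ↦ 2 * t ^ a + √t) =O[atTop] fun t ↦ t ^ a := by
  refine ((isBigO_refl _ _).const_mul_left 2).add (IsBigO.of_bound 1 ?_)
  filter_upwards [eventually_ge_atTop 1] with t ht
  rw [norm_of_nonneg (sqrt_nonneg t), norm_of_nonneg (by positivity), one_mul, sqrt_eq_rpow]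
  exact rpow_le_rpow_of_exponent_le ht ha

end Real

namespace Polynomial

theorem isBigO_pow_natDegree_atTop (P : ℝ[X]) :
    (fun x ↦ P.eval x) =O[atTop] fun x ↦ x ^ P.natDegree := by
  simpa using isBigO_atTop_of_degree_le P (X ^ P.natDegree) (by simp)

theorem isLittleO_eval_comp_exp_mul_rpow_atTop (P : ℝ[X]) {r : ℝ → ℝ} {a b p : ℝ}
    (hr : Tendsto r atTop atTop) (hra : r =O[atTop] fun t ↦ t ^ a) (hb : 0 < b) (hp : 0 < p) :
    (fun t ↦ P.eval (r t)) =o[atTop] fun t ↦ exp (b * t ^ p) := by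
  have hpow : (fun t : ℝ ↦ (t ^ a) ^ P.natDegree) =ᶠ[atTop] fun t ↦ t ^ (a * P.natDegree) := by
    filter_upwards [eventually_ge_atTop 0] with t ht
    rw [rpow_mul ht, rpow_natCast]
  exact ((P.isBigO_pow_natDegree_atTop.comp_tendsto hr).trans (hra.pow _)).trans_isLittleO
    ((isLittleO_rpow_exp_mul_rpow_atTop _ hb hp).congr' hpow.symm EventuallyEq.rfl)

end Polynomial

theorem exponential_ball_growth_not_polynomial_general
    {G : Type*} [Group G] (l : G → ℝ)
    (h0 : ∀ x : G, l x = 0 ↔ x = 1)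
    (hproper : ∀ M : ℝ, {g : G | l g ≤ M}.Finite)
    (p : ℝ) (hp : 0 < p)
    (ni : ℕ → ℕ) (hmono : StrictMono ni)
    (hineq : ∀ i : ℕ,
      (1 + 1 / (2 * (ni i : ℝ) ^ (1 + 2 * p))) ^ ((ni i : ℝ) ^ (1 + 3 * p)) *
          ({g : G | l g ≤ Real.sqrt (ni i)}.ncard : ℝ) ≤
        ({g : G | l g ≤ 2 * (ni i : ℝ) ^ ((3 : ℝ) / 2 + 4 * p) + Real.sqrt (ni i)}.ncard : ℝ)) :
    ¬ ∃ P : Polynomial ℝ, ∀ r : ℝ, 0 ≤ r →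
        ({g : G | l g ≤ r}.ncard : ℝ) ≤ P.eval r := by
  rintro ⟨P, hP⟩
  have hlo := P.isLittleO_eval_comp_exp_mul_rpow_atTop
    (tendsto_two_mul_rpow_add_sqrt_atTop (a := 3 / 2 + 4 * p) (by positivity))
    (isBigO_two_mul_rpow_add_sqrt_atTop (by linarith)) (by norm_num : (0 : ℝ) < 1 / 4) hp
  have hni : Tendsto (fun i ↦ (ni i : ℝ)) atTop atTop :=
    tendsto_natCast_atTop_atTop.comp hmono.tendsto_atTop
  have hexp_pos : ∀ᶠ t in atTop, 0 < ‖exp (1 / 4 * t ^ p)‖ :=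
    .of_forall fun t ↦ norm_pos_iff.mpr (exp_pos _).ne'
  obtain ⟨i, hi1, hlt⟩ := (hni.eventually ((eventually_ge_atTop 1).and
    (hlo.eventuallyLT_norm_of_eventually_pos hexp_pos))).exists
  have hball : (1 : ℝ) ≤ {g : G | l g ≤ √(ni i)}.ncard := by
    exact_mod_cast (Set.ncard_pos (hproper _)).mpr ⟨1, by simp [(h0 1).mpr rfl]⟩
  rw [norm_of_nonneg (exp_pos _).le, one_div_mul_eq_div] at hlt
  refine lt_irrefl (exp ((ni i : ℝ) ^ p / 4)) ?_
  calc exp ((ni i : ℝ) ^ p / 4)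
      ≤ (1 + 1 / (2 * (ni i : ℝ) ^ (1 + 2 * p))) ^ ((ni i : ℝ) ^ (1 + 3 * p)) :=
        exp_rpow_div_four_le_one_add_rpow hi1 hp.le
    _ ≤ _ * ({g : G | l g ≤ √(ni i)}.ncard : ℝ) := le_mul_of_one_le_right (by positivity) hball
    _ ≤ _ := hineq i
    _ ≤ P.eval (2 * (ni i : ℝ) ^ ((3 : ℝ) / 2 + 4 * p) + √(ni i)) := hP _ (by positivity)
    _ ≤ ‖P.eval (2 * (ni i : ℝ) ^ ((3 : ℝ) / 2 + 4 * p) + √(ni i))‖ := le_norm_self _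
    _ < exp ((ni i : ℝ) ^ p / 4) := hlt

/-- If a group `G` with proper length function admits a strictly increasing
sequence `(n_i)` of naturals with `n_i ≥ 2^{1/p}` and
`|B_{2n_i^{3/2+4p}+√n_i}| ≥ (1 + 1/(2n_i^{1+2p}))^{n_i^{1+3p}} |B_{√n_i}|`
for all `i` (some `p > 0`), then `G` does not have polynomial growth. -/
theorem exponential_ball_growth_not_polynomial
    {G : Type*} [Group G] (l : G → ℝ)
    (h0 : ∀ x : G, l x = 0 ↔ x = 1)
    (hinv : ∀ x : G, l x⁻¹ = l x)
    (hsub : ∀ x y : G, l (x * y) ≤ l x + l y)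
    (hproper : ∀ M : ℝ, {g : G | l g ≤ M}.Finite)
    (p : ℝ) (hp : 0 < p)
    (ni : ℕ → ℕ) (hmono : StrictMono ni)
    (hbig : ∀ i : ℕ, (2 : ℝ) ^ (1 / p) ≤ (ni i : ℝ))
    (hineq : ∀ i : ℕ,
      (1 + 1 / (2 * (ni i : ℝ) ^ (1 + 2 * p))) ^ ((ni i : ℝ) ^ (1 + 3 * p)) *
          ({g : G | l g ≤ Real.sqrt (ni i)}.ncard : ℝ) ≤
        ({g : G | l g ≤ 2 * (ni i : ℝ) ^ ((3 : ℝ) / 2 + 4 * p) + Real.sqrt (ni i)}.ncard : ℝ)) :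
    ¬ ∃ P : Polynomial ℝ, ∀ r : ℝ, 0 ≤ r →
        ({g : G | l g ≤ r}.ncard : ℝ) ≤ P.eval r :=
  exponential_ball_growth_not_polynomial_general l h0 hproper p hp ni hmono hineq
end
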